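/- arXiv:2202.09576 — 4 statements merged into one kernel-verified Lean document; each statement's English description precedes it below -/
import Mathlib

section
/- Let f be a monic polynomial of degree n ≥ 1 with real coefficients, let α be a real number with 1 ≤ α < 2, and set θ = (α-1)π/2. Then every complex root λ of f satisfies |arg(λ)| > απ/2 if and only if every complex number z with f(z·e^{iθ}) = 0 satisfies Re(z) < 0. -/
/-!
A root `λ = z e^{iθ}` has `Re z = |λ| cos (arg λ - θ)`. Since the roots of a real polynomial are
closed under conjugation, and `Re (conj λ · e^{-iθ}) = Re (λ e^{iθ})`, all roots have `Re z < 0` iff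
all roots satisfy both `cos (arg λ - θ) < 0` and `cos (arg λ + θ) < 0`; for `0 ≤ θ ≤ π/2` these two
conditions together cut out exactly the sector `|arg λ| > θ + π/2 = απ/2`.
-/

open Polynomial Complex ComplexConjugate

lemma re_mul_exp_ofReal_mul_I (w : ℂ) (θ : ℝ) :
    (w * exp (θ * I)).re = ‖w‖ * Real.cos (arg w + θ) := by
  conv_lhs => rw [← norm_mul_exp_arg_mul_I w]
  rw [mul_assoc, ← exp_add, ← add_mul, ← ofReal_add, re_ofReal_mul, exp_ofReal_mul_I_re]

lemma re_conj_mul_exp_neg (w : ℂ) (θ : ℝ) :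
    (conj w * exp (-θ * I)).re = (w * exp (θ * I)).re := by
  rw [← conj_re (w * exp (θ * I)), map_mul, ← exp_conj, map_mul, conj_ofReal, conj_I, mul_neg,
    neg_mul]

namespace Real

lemma lt_iff_cos_sub_neg_and_cos_add_neg {θ ψ : ℝ} (hθ₀ : 0 ≤ θ) (hθ : θ ≤ π / 2) (hψ₀ : 0 ≤ ψ)
    (hψ : ψ ≤ π) : θ + π / 2 < ψ ↔ cos (ψ - θ) < 0 ∧ cos (ψ + θ) < 0 := by
  refine ⟨fun h ↦ ⟨?_, ?_⟩, fun ⟨h, _⟩ ↦ ?_⟩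
  · exact cos_neg_of_pi_div_two_lt_of_lt (by linarith) (by linarith)
  · exact cos_neg_of_pi_div_two_lt_of_lt (by linarith) (by linarith)
  · by_contra! hle
    exact h.not_ge (cos_nonneg_of_neg_pi_div_two_le_of_le (by linarith) (by linarith))

lemma lt_abs_iff_cos_sub_neg_and_cos_add_neg {θ φ : ℝ} (hθ₀ : 0 ≤ θ) (hθ : θ ≤ π / 2)
    (hφ : |φ| ≤ π) : θ + π / 2 < |φ| ↔ cos (φ - θ) < 0 ∧ cos (φ + θ) < 0 := by
  rw [lt_iff_cos_sub_neg_and_cos_add_neg hθ₀ hθ (abs_nonneg φ) hφ]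
  rcases abs_cases φ with ⟨hφ, -⟩ | ⟨hφ, -⟩
  · rw [hφ]
  · rw [hφ, show -φ - θ = -(φ + θ) by ring, show -φ + θ = -(φ - θ) by ring, cos_neg, cos_neg,
      and_comm]

end Real

lemma lt_abs_arg_iff {θ : ℝ} (hθ₀ : 0 ≤ θ) (hθ : θ ≤ Real.pi / 2) (w : ℂ) :
    θ + Real.pi / 2 < |arg w| ↔ (w * exp (-θ * I)).re < 0 ∧ (w * exp (θ * I)).re < 0 := by
  rcases eq_or_ne w 0 with rfl | hw
  · simp only [arg_zero, abs_zero, zero_mul, zero_re, lt_self_iff_false, and_false, iff_false]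
    linarith [Real.pi_pos]
  have hnorm : 0 < ‖w‖ := norm_pos_iff.mpr hw
  rw [← ofReal_neg, re_mul_exp_ofReal_mul_I, re_mul_exp_ofReal_mul_I, ← sub_eq_add_neg]
  exact (Real.lt_abs_iff_cos_sub_neg_and_cos_add_neg hθ₀ hθ (abs_arg_le_pi w)).trans
    (and_congr (smul_neg_iff_of_pos_left hnorm).symm (smul_neg_iff_of_pos_left hnorm).symm)

lemma forall_lt_abs_arg_iff_forall_re_mul_exp_neg {S : Set ℂ} (hS : ∀ w ∈ S, conj w ∈ S) {θ : ℝ}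
    (hθ₀ : 0 ≤ θ) (hθ : θ ≤ Real.pi / 2) :
    (∀ w ∈ S, θ + Real.pi / 2 < |arg w|) ↔ ∀ w ∈ S, (w * exp (-θ * I)).re < 0 := by
  simp only [lt_abs_arg_iff hθ₀ hθ]
  refine ⟨fun h w hw ↦ (h w hw).1, fun h w hw ↦ ⟨h w hw, ?_⟩⟩
  rw [← re_conj_mul_exp_neg]
  exact h _ (hS w hw)

lemma isRoot_map_conj {p : ℝ[X]} {w : ℂ} (hw : (p.map (algebraMap ℝ ℂ)).IsRoot w) :
    (p.map (algebraMap ℝ ℂ)).IsRoot (conj w) := by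
  rw [IsRoot, eval_map_algebraMap, aeval_conj, ← eval_map_algebraMap, hw.eq_zero, map_zero]

lemma forall_eval_mul_exp_iff (p : ℂ[X]) (q : ℂ → Prop) (θ : ℝ) :
    (∀ z : ℂ, p.eval (z * exp (θ * I)) = 0 → q z) ↔
      ∀ w : ℂ, p.IsRoot w → q (w * exp (-θ * I)) := by
  refine (Equiv.mulRight₀ (exp (θ * I)) (exp_ne_zero _)).forall_congr fun z ↦ ?_
  simp [mul_assoc, ← exp_add]

theorem sector_iff_rotated_left_half_plane_general
    (f : Polynomial ℝ)
    (α : ℝ) (hα1 : 1 ≤ α) (hα2 : α < 2) (θ : ℝ) (hθ : θ = (α - 1) * Real.pi / 2) :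
    (∀ z : ℂ, (f.map (algebraMap ℝ ℂ)).IsRoot z → α * Real.pi / 2 < |z.arg|) ↔
      (∀ z : ℂ, (f.map (algebraMap ℝ ℂ)).eval (z * Complex.exp (θ * Complex.I)) = 0 →
        z.re < 0) := by
  have hθ₀ : 0 ≤ θ := by rw [hθ]; nlinarith [Real.pi_pos]
  have hθπ : θ ≤ Real.pi / 2 := by rw [hθ]; nlinarith [Real.pi_pos]
  rw [show α * Real.pi / 2 = θ + Real.pi / 2 by rw [hθ]; ring, forall_eval_mul_exp_iff]
  exact forall_lt_abs_arg_iff_forall_re_mul_exp_neg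
    (S := {w | (f.map (algebraMap ℝ ℂ)).IsRoot w}) (fun _ ↦ isRoot_map_conj) hθ₀ hθπ

/-- For a monic real polynomial `f` of degree `n ≥ 1` and `1 ≤ α < 2`, with
`θ = (α-1)π/2`: all complex roots of `f` lie in the stability sector
`|arg λ| > απ/2` iff all complex `z` with `f (z · e^{iθ}) = 0` have negative
real part. -/
theorem sector_iff_rotated_left_half_plane (n : ℕ) (hn : 1 ≤ n)
    (f : Polynomial ℝ) (hmonic : f.Monic) (hdeg : f.natDegree = n)
    (α : ℝ) (hα1 : 1 ≤ α) (hα2 : α < 2) (θ : ℝ) (hθ : θ = (α - 1) * Real.pi / 2) :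
    (∀ z : ℂ, (f.map (algebraMap ℝ ℂ)).IsRoot z → α * Real.pi / 2 < |z.arg|) ↔
      (∀ z : ℂ, (f.map (algebraMap ℝ ℂ)).eval (z * Complex.exp (θ * Complex.I)) = 0 →
        z.re < 0) :=
  sector_iff_rotated_left_half_plane_general f α hα1 hα2 θ hθ
end

section
/- Let α be a real number with 1 ≤ α < 2, set s = cos²(απ/2), and let A be a 2×2 real matrix whose characteristic polynomial is λ² + a_1 λ + a_2. Then every complex eigenvalue λ of A satisfies |arg(λ)| > απ/2 if and only if a_1 > 0 and a_2·(a_1² - 4·a_2·s) > 0. -/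
open Polynomial Complex Matrix

open scoped Real ComplexConjugate

/-!
Put θ = απ/2 ∈ [π/2, π). Since cos is decreasing on [0, π], a nonzero z satisfies
θ < |arg z| iff Re z < ‖z‖ cos θ. If the roots r₁, r₂ are real, the condition says both are
negative, i.e. a₁ > 0 and a₂ > 0; then a₁² - 4a₂cos²θ = (r₁ - r₂)² + 4a₂ sin²θ > 0 is automatic.
If the roots are a conjugate pair z, z̄, then a₁ = -2 Re z and a₂ = ‖z‖², and
Re z < ‖z‖ cos θ ≤ 0 amounts to a₁ > 0 together with a₁² > 4a₂cos²θ.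
-/

theorem lt_abs_arg_ofReal_iff {θ : ℝ} (hθ₀ : 0 ≤ θ) (hθπ : θ < π) (x : ℝ) :
    θ < |arg (x : ℂ)| ↔ x < 0 := by
  rcases lt_or_ge x 0 with hx | hx
  · simp [arg_ofReal_of_neg hx, abs_of_pos Real.pi_pos, hθπ, hx]
  · simp [arg_ofReal_of_nonneg hx, hθ₀.not_gt, hx.not_gt]

theorem lt_abs_arg_iff_re_lt {θ : ℝ} (hθ₀ : 0 ≤ θ) (hθπ : θ ≤ π) {z : ℂ} (hz : z ≠ 0) :
    θ < |arg z| ↔ z.re < ‖z‖ * Real.cos θ := by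
  rw [← Real.strictAntiOn_cos.lt_iff_gt ⟨abs_nonneg _, abs_arg_le_pi z⟩ ⟨hθ₀, hθπ⟩,
    Real.cos_abs, cos_arg hz, div_lt_iff₀' (norm_pos_iff.mpr hz)]

theorem abs_arg_conj_of_im_ne_zero {z : ℂ} (hz : z.im ≠ 0) : |arg (conj z)| = |arg z| := by
  rw [arg_conj, if_neg (fun h => hz (arg_eq_pi_iff.mp h).2), abs_neg]

theorem neg_and_neg_iff_of_vieta {r₁ r₂ a₁ a₂ s : ℝ} (hs₀ : 0 ≤ s) (hs₁ : s < 1)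
    (hsum : r₁ + r₂ = -a₁) (hprod : r₁ * r₂ = a₂) :
    r₁ < 0 ∧ r₂ < 0 ↔ 0 < a₁ ∧ 0 < a₂ * (a₁ ^ 2 - 4 * a₂ * s) := by
  subst hprod
  have hdisc : a₁ ^ 2 - 4 * (r₁ * r₂) * s = (r₁ - r₂) ^ 2 + 4 * (r₁ * r₂) * (1 - s) := by
    obtain rfl : a₁ = -(r₁ + r₂) := by linarith
    ring
  constructor
  · rintro ⟨h₁, h₂⟩
    have hp : 0 < r₁ * r₂ := mul_pos_of_neg_of_neg h₁ h₂
    refine ⟨by linarith, mul_pos hp ?_⟩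
    rw [hdisc]
    nlinarith [sq_nonneg (r₁ - r₂)]
  · rintro ⟨ha₁, hpos⟩
    have hp : 0 < r₁ * r₂ := by
      by_contra! h
      nlinarith [mul_nonneg (neg_nonneg.mpr h) hs₀]
    constructor <;> nlinarith

theorem lt_mul_iff_of_vieta {x m c a₁ a₂ : ℝ} (hm : 0 < m) (hc : c ≤ 0)
    (hsum : 2 * x = -a₁) (hprod : m ^ 2 = a₂) :
    x < m * c ↔ 0 < a₁ ∧ 0 < a₂ * (a₁ ^ 2 - 4 * a₂ * c ^ 2) := by
  subst hprod
  obtain rfl : a₁ = -2 * x := by linarith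
  have hmc : m * c ≤ 0 := mul_nonpos_of_nonneg_of_nonpos hm.le hc
  rw [show m ^ 2 * ((-2 * x) ^ 2 - 4 * m ^ 2 * c ^ 2) =
      4 * m ^ 2 * ((m * c - x) * (-x - m * c)) by ring,
    mul_pos_iff_of_pos_left (by positivity : (0 : ℝ) < 4 * m ^ 2)]
  constructor
  · intro h
    exact ⟨by linarith, mul_pos (by linarith) (by linarith)⟩
  · rintro ⟨hx, hpos⟩
    by_contra! h
    exact hpos.not_ge (mul_nonpos_of_nonpos_of_nonneg (by linarith) (by linarith))

theorem vieta_of_quadratic_root_of_im_ne_zero {a₁ a₂ : ℝ} {z : ℂ}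
    (hz : z ^ 2 + a₁ * z + a₂ = 0) (him : z.im ≠ 0) : 2 * z.re = -a₁ ∧ ‖z‖ ^ 2 = a₂ := by
  have hre := congrArg re hz
  have him' := congrArg im hz
  simp only [sq, add_re, add_im, mul_re, mul_im, ofReal_re, ofReal_im, zero_re, zero_im] at hre him'
  have hsum : 2 * z.re = -a₁ := by
    have : z.im * (2 * z.re + a₁) = 0 := by linear_combination him'
    linarith [(mul_eq_zero.mp this).resolve_left him]
  refine ⟨hsum, ?_⟩
  rw [Complex.sq_norm, normSq_apply]
  linear_combination -hre + z.re * hsum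

theorem forall_quadratic_root_lt_abs_arg_iff {θ a₁ a₂ : ℝ} (hθ₁ : π / 2 ≤ θ) (hθ₂ : θ < π) :
    (∀ z : ℂ, z ^ 2 + a₁ * z + a₂ = 0 → θ < |arg z|) ↔
      0 < a₁ ∧ 0 < a₂ * (a₁ ^ 2 - 4 * a₂ * Real.cos θ ^ 2) := by
  have hθ₀ : 0 ≤ θ := by linarith [Real.pi_pos]
  obtain ⟨z, hz⟩ : ∃ z : ℂ, z ^ 2 + a₁ * z + a₂ = 0 := by
    simpa [sq] using
      exists_quadratic_eq_zero one_ne_zero (IsAlgClosed.exists_eq_mul_self (discrim 1 (a₁ : ℂ) a₂))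
  have hroots : ∀ y : ℂ, y ^ 2 + a₁ * y + a₂ = 0 ↔ y = z ∨ y = -a₁ - z := by
    intro y
    rw [show y ^ 2 + a₁ * y + a₂ = (y - z) * (y - (-a₁ - z)) by linear_combination hz,
      mul_eq_zero, sub_eq_zero, sub_eq_zero]
  simp only [hroots, forall_eq_or_imp, forall_eq]
  by_cases him : z.im = 0
  · have hsin : 0 < Real.sin θ := Real.sin_pos_of_pos_of_lt_pi (by linarith [Real.pi_pos]) hθ₂
    have hcos : Real.cos θ ^ 2 < 1 := by nlinarith [Real.sin_sq_add_cos_sq θ]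
    obtain ⟨r, rfl⟩ : ∃ r : ℝ, z = r := ⟨z.re, Complex.ext rfl (by simpa using him)⟩
    have hprod : r * (-a₁ - r) = a₂ := by
      have : ((r ^ 2 + a₁ * r + a₂ : ℝ) : ℂ) = 0 := by push_cast; exact hz
      linear_combination -(ofReal_eq_zero.mp this)
    rw [show -(a₁ : ℂ) - r = ((-a₁ - r : ℝ) : ℂ) by push_cast; ring,
      lt_abs_arg_ofReal_iff hθ₀ hθ₂, lt_abs_arg_ofReal_iff hθ₀ hθ₂]
    exact neg_and_neg_iff_of_vieta (sq_nonneg _) hcos (by ring) hprod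
  · obtain ⟨hsum, hprod⟩ := vieta_of_quadratic_root_of_im_ne_zero hz him
    have hconj : -(a₁ : ℂ) - z = conj z := Complex.ext (by simp; linarith) (by simp)
    have hz₀ : z ≠ 0 := fun h => him (by simp [h])
    rw [hconj, abs_arg_conj_of_im_ne_zero him, and_self, lt_abs_arg_iff_re_lt hθ₀ hθ₂.le hz₀]
    exact lt_mul_iff_of_vieta (norm_pos_iff.mpr hz₀)
      (Real.cos_nonpos_of_pi_div_two_le_of_le hθ₁ (by linarith)) hsum hprod

/-- Stability criterion for 2-dimensional fractional-order systems with
`1 ≤ α < 2` and `s = cos²(απ/2)`: all eigenvalues `λ` of `A` satisfy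
`|arg λ| > απ/2` iff `a₁ > 0` and `a₂(a₁² - 4a₂s) > 0`. -/
theorem frac_stability_dim2 (α : ℝ) (hα1 : 1 ≤ α) (hα2 : α < 2)
    (s : ℝ) (hs : s = Real.cos (α * Real.pi / 2) ^ 2)
    (a1 a2 : ℝ) (A : Matrix (Fin 2) (Fin 2) ℝ)
    (hchar : A.charpoly = X ^ 2 + C a1 * X + C a2) :
    (∀ z : ℂ, (A.charpoly.map (algebraMap ℝ ℂ)).IsRoot z → α * Real.pi / 2 < |z.arg|) ↔
      (0 < a1 ∧ 0 < a2 * (a1 ^ 2 - 4 * a2 * s)) := by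
  have hroot : ∀ z : ℂ, (A.charpoly.map (algebraMap ℝ ℂ)).IsRoot z ↔
      z ^ 2 + a1 * z + a2 = 0 := by
    simp [hchar]
  simp only [hroot, hs]
  exact forall_quadratic_root_lt_abs_arg_iff (by nlinarith [Real.pi_pos]) (by nlinarith [Real.pi_pos])
end

section
/- Let α be a real number and let A be a 2×2 real matrix with entries a_11, a_12, a_21, a_22, whose characteristic polynomial is λ² + a_1 λ + a_2 with a_1 = -(a_11 + a_22) and a_2 = a_11a_22 - a_12a_21. Let H_α be the corresponding 4×4 fractional-order Routh-Hurwitz matrix (with n = 2). Then the leading principal minor of order 2 of H_α equals -(a_11 + a_22)·sin(απ/2), and the leading principal minor of order 4 of H_α (i.e. det H_α) equals (a_11a_22 - a_12a_21)·sin²(απ/2)·((a_11 + a_22)² - 4(a_11a_22 - a_12a_21)·cos²(απ/2)). -/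
open Polynomial Complex Matrix

/-- The 2n×2n fractional-order Routh–Hurwitz matrix `H_α` of the monic real polynomial
with coefficient sequence `a` (where `a 0 = 1`): row `2r+1` (1-indexed) has entry
`a j * sin ((n-j)απ/2)` in column `r+j+1` (1-indexed) for `0 ≤ j ≤ n` and zeros
elsewhere; row `2r+2` has entry `a j * cos ((n-j)απ/2)` in column `r+j+1` and zeros
elsewhere. -/
noncomputable def fracRouthHurwitz (n : ℕ) (α : ℝ) (a : ℕ → ℝ) :
    Matrix (Fin (2 * n)) (Fin (2 * n)) ℝ :=
  fun i c =>
    if i.val / 2 ≤ c.val ∧ c.val ≤ i.val / 2 + n then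
      (if i.val % 2 = 0 then
        a (c.val - i.val / 2) *
          Real.sin (((n - (c.val - i.val / 2) : ℕ) : ℝ) * α * Real.pi / 2)
      else
        a (c.val - i.val / 2) *
          Real.cos (((n - (c.val - i.val / 2) : ℕ) : ℝ) * α * Real.pi / 2))
    else 0

/-!
For `n = 2` the last column of `H_α` vanishes except for its corner entry `a₂`, so `det H_α` is
`a₂` times a `3 × 3` minor. With `a₀ = 1`, `s = sin (απ/2)`, `c = cos (απ/2)`, the double-angle
formulas `sin απ = 2sc`, `cos απ = c² - s²` and `s² + c² = 1` reduce that minor to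
`s² (a₁² - 4 a₂ c²)`. The order-2 minor is `a₀ a₁ sin (nθ - (n - 1)θ) = a₀ a₁ sin θ`, `θ = απ/2`, for
every `n ≥ 1`.
-/

theorem Matrix.det_submatrix_castLE_two {R : Type*} [CommRing R] {n : ℕ} (h : 2 ≤ n)
    (M : Matrix (Fin n) (Fin n) R) :
    (M.submatrix (Fin.castLE h) (Fin.castLE h)).det =
      M ⟨0, by omega⟩ ⟨0, by omega⟩ * M ⟨1, by omega⟩ ⟨1, by omega⟩
        - M ⟨0, by omega⟩ ⟨1, by omega⟩ * M ⟨1, by omega⟩ ⟨0, by omega⟩ := by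
  rw [det_fin_two]
  rfl

theorem Matrix.det_fin_four_banded {R : Type*} [CommRing R] (p q u v w : R) :
    (!![p, u, 0, 0; q, v, w, 0; 0, p, u, 0; 0, q, v, w] : Matrix (Fin 4) (Fin 4) R).det =
      w * (p * u * v - p ^ 2 * w - q * u ^ 2) := by
  simp [det_succ_column _ 3, Fin.sum_univ_succ, Fin.succAbove]
  ring

section

variable (α : ℝ) (a : ℕ → ℝ)

theorem fracRouthHurwitz_two :
    fracRouthHurwitz 2 α a =
      !![a 0 * Real.sin (α * Real.pi), a 1 * Real.sin (α * Real.pi / 2), 0, 0;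
         a 0 * Real.cos (α * Real.pi), a 1 * Real.cos (α * Real.pi / 2), a 2, 0;
         0, a 0 * Real.sin (α * Real.pi), a 1 * Real.sin (α * Real.pi / 2), 0;
         0, a 0 * Real.cos (α * Real.pi), a 1 * Real.cos (α * Real.pi / 2), a 2] := by
  have h2 : 2 * α * Real.pi / 2 = α * Real.pi := by ring
  ext i j
  fin_cases i <;> fin_cases j <;> simp [fracRouthHurwitz, h2]

variable {a}

theorem det_leading_two_fracRouthHurwitz {n : ℕ} (h : 2 ≤ 2 * n) :
    ((fracRouthHurwitz n α a).submatrix (Fin.castLE h) (Fin.castLE h)).det =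
      a 0 * a 1 * Real.sin (α * Real.pi / 2) := by
  have hn : 1 ≤ n := by omega
  have hsub : Real.sin (n * α * Real.pi / 2) * Real.cos ((n - 1) * α * Real.pi / 2)
      - Real.cos (n * α * Real.pi / 2) * Real.sin ((n - 1) * α * Real.pi / 2)
      = Real.sin (α * Real.pi / 2) := by
    rw [← Real.sin_sub]
    ring_nf
  rw [det_submatrix_castLE_two]
  simp only [fracRouthHurwitz, Nat.zero_div, Nat.reduceDiv, Nat.zero_mod, Nat.mod_succ, zero_add,
    zero_le, le_refl, and_self, hn, tsub_zero, tsub_self, one_ne_zero, ↓reduceIte, Nat.cast_sub hn,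
    Nat.cast_one]
  linear_combination a 0 * a 1 * hsub

theorem det_fracRouthHurwitz_two (ha0 : a 0 = 1) :
    (fracRouthHurwitz 2 α a).det = a 2 * Real.sin (α * Real.pi / 2) ^ 2 *
      (a 1 ^ 2 - 4 * a 2 * Real.cos (α * Real.pi / 2) ^ 2) := by
  have hsin := Real.sin_two_mul (α * Real.pi / 2)
  have hcos := Real.cos_two_mul' (α * Real.pi / 2)
  rw [mul_div_cancel₀ _ two_ne_zero] at hsin hcos
  rw [fracRouthHurwitz_two, det_fin_four_banded, ha0, one_mul, one_mul, hsin, hcos]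
  linear_combination a 2 * a 1 ^ 2 * Real.sin (α * Real.pi / 2) ^ 2 *
    Real.sin_sq_add_cos_sq (α * Real.pi / 2)

end

theorem frac_routh_hurwitz_minors_dim2 (α : ℝ) (a11 a12 a21 a22 a1 a2 : ℝ)
    (ha1 : a1 = -(a11 + a22)) (ha2 : a2 = a11 * a22 - a12 * a21)
    (Hα : Matrix (Fin (2 * 2)) (Fin (2 * 2)) ℝ)
    (hHα : Hα = fracRouthHurwitz 2 α
      (fun j => if j = 0 then 1 else if j = 1 then a1 else if j = 2 then a2 else 0)) :
    (Hα.submatrix (Fin.castLE (by omega : 2 ≤ 2 * 2))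
        (Fin.castLE (by omega : 2 ≤ 2 * 2))).det
      = -(a11 + a22) * Real.sin (α * Real.pi / 2) ∧
    Hα.det = (a11 * a22 - a12 * a21) * Real.sin (α * Real.pi / 2) ^ 2 *
        ((a11 + a22) ^ 2
          - 4 * (a11 * a22 - a12 * a21) * Real.cos (α * Real.pi / 2) ^ 2) := by
  subst hHα ha1 ha2
  refine ⟨?_, ?_⟩
  · rw [det_leading_two_fracRouthHurwitz]
    simp
  · rw [det_fracRouthHurwitz_two α rfl]
    simp only [one_ne_zero, OfNat.ofNat_ne_zero, OfNat.ofNat_ne_one, if_false, if_true]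
    ring
end

section
/- Let β_1, β_2 be real numbers and let M(β_1, β_2) = A_0 + β_1 A_1 + β_2 A_2, where A_0 = [[-1, 3], [0, -1]], A_1 = [[-1, 0], [1, -1]], and A_2 = [[-1, 1], [0, 0]]. Then every complex eigenvalue λ of M(β_1, β_2) satisfies |arg(λ)| > 3π/4 if and only if 2β_1 + 2 + β_2 > 0 and (β_1² + β_2 - β_1 + 1)·((2β_1 + 2 + β_2)² - 2(β_1² + β_2 - β_1 + 1)) > 0. -/
/-!
For `λ = x + iy` the condition `|arg λ| > 3π/4` is `cos |arg λ| < -√2/2`, i.e. `x + |y| < 0`.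
The eigenvalues of a real `2 × 2` matrix are the roots of `λ² + bλ + c` with `b = -tr M` and
`c = det M`. If they are real, the condition says both are negative, i.e. `b > 0` and `c > 0`
(and then `b² ≥ 4c > 2c`); if they are a conjugate pair `(-b ± it) / 2`, it says `t < b`, i.e.
`b > 0` and `b² / 4 < c < b² / 2`. Either way it amounts to `b > 0`, `c > 0` and `2c < b²`.
-/

open Complex Matrix

theorem Complex.lt_abs_arg_iff_re_lt_cos_mul_norm {θ : ℝ} (hθ : θ ∈ Set.Icc 0 Real.pi) {z : ℂ}
    (hz : z ≠ 0) : θ < |z.arg| ↔ z.re < Real.cos θ * ‖z‖ := by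
  have harg : |z.arg| ∈ Set.Icc 0 Real.pi := ⟨abs_nonneg _, abs_arg_le_pi z⟩
  rw [← Real.strictAntiOn_cos.lt_iff_gt harg hθ, Real.cos_abs, cos_arg hz,
    div_lt_iff₀ (norm_pos_iff.mpr hz)]

theorem Complex.three_pi_div_four_lt_abs_arg_iff (z : ℂ) :
    3 * Real.pi / 4 < |z.arg| ↔ z.re + |z.im| < 0 := by
  rcases eq_or_ne z 0 with rfl | hz
  · simp only [arg_zero, abs_zero, zero_re, zero_im, add_zero, lt_self_iff_false, iff_false,
      not_lt]
    positivity
  have hθ : 3 * Real.pi / 4 ∈ Set.Icc 0 Real.pi := ⟨by positivity, by linarith [Real.pi_pos]⟩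
  have hcos : Real.cos (3 * Real.pi / 4) = -(√2 / 2) := by
    rw [show 3 * Real.pi / 4 = Real.pi - Real.pi / 4 by ring, Real.cos_pi_sub,
      Real.cos_pi_div_four]
  rw [lt_abs_arg_iff_re_lt_cos_mul_norm hθ hz, hcos]
  have hnorm : ‖z‖ ^ 2 = z.re ^ 2 + z.im ^ 2 := by rw [Complex.sq_norm, normSq_apply]; ring
  have hsqrt : √2 ^ 2 = 2 := Real.sq_sqrt zero_le_two
  have hnorm_nonneg : 0 ≤ ‖z‖ := norm_nonneg z
  have hsqrt_pos : 0 < √2 := by positivity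
  constructor
  · intro h
    have hre : z.re < 0 := by nlinarith [mul_nonneg hsqrt_pos.le hnorm_nonneg]
    have : z.im ^ 2 < (-z.re) ^ 2 := by nlinarith [mul_nonneg hsqrt_pos.le hnorm_nonneg]
    linarith [abs_lt_of_sq_lt_sq this (by linarith)]
  · intro h
    have him : z.im ^ 2 < z.re ^ 2 := by nlinarith [abs_nonneg z.im, sq_abs z.im]
    have : (√2 * ‖z‖) ^ 2 < (-2 * z.re) ^ 2 := by rw [mul_pow, hsqrt]; nlinarith
    linarith [abs_lt_of_sq_lt_sq this (by linarith [abs_nonneg z.im]), le_abs_self (√2 * ‖z‖)]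

theorem Matrix.isRoot_map_charpoly_fin_two_iff {R S : Type*} [CommRing R] [Nontrivial R]
    [CommRing S] [Algebra R S] (M : Matrix (Fin 2) (Fin 2) R) (z : S) :
    (M.charpoly.map (algebraMap R S)).IsRoot z ↔
      z ^ 2 - algebraMap R S M.trace * z + algebraMap R S M.det = 0 := by
  simp [charpoly_fin_two]

theorem re_add_abs_im_neg_of_sq_add_mul_add_eq_zero {b c : ℝ} (hb : 0 < b) (hc : 0 < c)
    (hbc : 2 * c < b ^ 2) {z : ℂ} (hz : z ^ 2 + b * z + c = 0) : z.re + |z.im| < 0 := by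
  have hre : z.re ^ 2 - z.im ^ 2 + b * z.re + c = 0 := by
    simpa [sq] using congrArg Complex.re hz
  have him : z.im * (2 * z.re + b) = 0 := by
    have := congrArg Complex.im hz
    simp only [sq, add_im, mul_im, ofReal_re, ofReal_im, zero_im] at this
    linarith
  rcases mul_eq_zero.mp him with hy | hx
  · rw [hy] at hre ⊢
    rw [abs_zero, add_zero]
    nlinarith
  · have hx : z.re = -b / 2 := by linarith
    have hy : z.im ^ 2 < (b / 2) ^ 2 := by rw [hx] at hre; nlinarith
    linarith [abs_lt_of_sq_lt_sq hy (by positivity)]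

theorem pos_of_forall_sq_add_mul_add_eq_zero {b c : ℝ}
    (H : ∀ z : ℂ, z ^ 2 + b * z + c = 0 → z.re + |z.im| < 0) :
    0 < b ∧ 0 < c ∧ 2 * c < b ^ 2 := by
  rcases le_or_gt 0 (b ^ 2 - 4 * c) with hd | hd
  · -- the roots `(-b ± s) / 2`, `s = √(b² - 4c)`, are real
    obtain ⟨s, hs, hs0⟩ : ∃ s : ℝ, s ^ 2 = b ^ 2 - 4 * c ∧ 0 ≤ s :=
      ⟨_, Real.sq_sqrt hd, Real.sqrt_nonneg _⟩
    have real_root_neg (x : ℝ) (hx : x ^ 2 + b * x + c = 0) : x < 0 := by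
      simpa using H x (by exact_mod_cast hx)
    have h₁ := real_root_neg ((-b + s) / 2) (by nlinarith)
    have h₂ := real_root_neg ((-b - s) / 2) (by nlinarith)
    refine ⟨by linarith, by nlinarith, by nlinarith⟩
  · -- the roots `(-b ± i t) / 2`, `t = √(4c - b²)`, are non-real
    obtain ⟨t, ht, ht0⟩ : ∃ t : ℝ, t ^ 2 = 4 * c - b ^ 2 ∧ 0 < t :=
      ⟨_, Real.sq_sqrt (by linarith), Real.sqrt_pos.mpr (by linarith)⟩
    have h := H (-b / 2 + t / 2 * I) (by apply Complex.ext <;> simp [sq] <;> nlinarith)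
    norm_num at h
    rw [abs_of_pos (by positivity)] at h
    refine ⟨by linarith, by nlinarith, by nlinarith⟩

theorem forall_sq_add_mul_add_eq_zero_re_add_abs_im_neg_iff (b c : ℝ) :
    (∀ z : ℂ, z ^ 2 + b * z + c = 0 → z.re + |z.im| < 0) ↔
      0 < b ∧ 0 < c * (b ^ 2 - 2 * c) := by
  refine ⟨fun H => ?_, fun ⟨hb, hbc⟩ z hz => ?_⟩
  · obtain ⟨hb, hc, hbc⟩ := pos_of_forall_sq_add_mul_add_eq_zero H
    exact ⟨hb, mul_pos hc (by linarith)⟩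
  · obtain ⟨hc, hbc⟩ : 0 < c ∧ 0 < b ^ 2 - 2 * c := by
      rcases mul_pos_iff.mp hbc with h | h
      · exact h
      · nlinarith
    exact re_add_abs_im_neg_of_sq_add_mul_add_eq_zero hb hc (by linarith) hz

/-- Robust stability region for the fractional-order uncertain system
`D^{1.5} x = (A₀ + β₁A₁ + β₂A₂) x`: its eigenvalues `λ` all satisfy
`|arg λ| > 3π/4` iff the two explicit inequalities in `β₁, β₂` hold. -/
theorem robust_stability_example (β1 β2 : ℝ)
    (M : Matrix (Fin 2) (Fin 2) ℝ)
    (hM : M = !![(-1 : ℝ), 3; 0, -1] + β1 • !![(-1 : ℝ), 0; 1, -1]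
            + β2 • !![(-1 : ℝ), 1; 0, 0]) :
    (∀ z : ℂ, (M.charpoly.map (algebraMap ℝ ℂ)).IsRoot z → 3 * Real.pi / 4 < |z.arg|) ↔
      (0 < 2 * β1 + 2 + β2 ∧
        0 < (β1 ^ 2 + β2 - β1 + 1) *
          ((2 * β1 + 2 + β2) ^ 2 - 2 * (β1 ^ 2 + β2 - β1 + 1))) := by
  have hM' : M = !![-1 - β1 - β2, 3 + β2; β1, -1 - β1] := by
    rw [hM]
    ext i j
    fin_cases i <;> fin_cases j <;> simp <;> ring
  have htrace : M.trace = -(2 * β1 + 2 + β2) := by rw [hM', trace_fin_two_of]; ring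
  have hdet : M.det = β1 ^ 2 + β2 - β1 + 1 := by rw [hM', det_fin_two_of]; ring
  rw [← forall_sq_add_mul_add_eq_zero_re_add_abs_im_neg_iff]
  refine forall_congr' fun z => imp_congr ?_ (three_pi_div_four_lt_abs_arg_iff z)
  rw [isRoot_map_charpoly_fin_two_iff, htrace, hdet, coe_algebraMap]
  push_cast
  ring_nf
end
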